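/- In 𝒰, for all i, j ∈ I and all r ∈ ℕ one has [h_{i,1}, b_{j,r}] = 2(α_i,α_j)·b_{j,r+1}. -/

import Mathlib

noncomputable section

/-- Data of a symmetrizable generalized Cartan matrix `(c_{ij})` (of finite type size bounds)
together with a positive symmetrizer `(d_i)`. -/
structure CartanData (I : Type) [Fintype I] : Type where
  c : I → I → ℤ
  d : I → ℝ
  c_diag : ∀ i, c i i = 2
  c_nonpos : ∀ i j, i ≠ j → c i j ≤ 0
  c_zero_iff : ∀ i j, c i j = 0 ↔ c j i = 0
  c_bound : ∀ i j, i ≠ j → c i j * c j i ≤ 3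
  d_pos : ∀ i, 0 < d i
  d_symm : ∀ i j, d i * (c i j : ℝ) = d j * (c j i : ℝ)

/-- The pairing `(α_i, α_j) = d_i · c_{ij}`. -/
def CartanData.al {I : Type} [Fintype I] (A : CartanData I) (i j : I) : ℝ :=
  A.d i * (A.c i j : ℝ)

/-- Generators for Drinfeld-type presentations: `h i r` stands for `h_{i,2r+1}` and
`b i r` stands for `b_{i,r}`. -/
inductive TYGen (I : Type) : Type
  | h : I → ℕ → TYGen I
  | b : I → ℕ → TYGen I

section Algebras

variable {I : Type} [Fintype I] [DecidableEq I]

/-- The element `h_{i,r}` of the free algebra, for `r : ℤ`, with the conventions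
`h_{i,-1} = 1` and `h_{i,r} = 0` for `r` even or `r < -1`. -/
def TYh (i : I) (r : ℤ) : FreeAlgebra ℂ (TYGen I) :=
  if r = -1 then 1
  else if 0 ≤ r ∧ r % 2 = 1 then FreeAlgebra.ι ℂ (TYGen.h i ((r - 1) / 2).toNat)
  else 0

/-- The generator `b_{i,r}` of the free algebra. -/
def TYb (i : I) (r : ℕ) : FreeAlgebra ℂ (TYGen I) := FreeAlgebra.ι ℂ (TYGen.b i r)

/-- The generator `h_{i,2r+1}` of the free algebra. -/
def TYhodd (i : I) (r : ℕ) : FreeAlgebra ℂ (TYGen I) := FreeAlgebra.ι ℂ (TYGen.h i r)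

/-- The element `h_{i,n}` of the free algebra, `n : ℕ`, with the convention `h_{i,2r} = 0`. -/
def TYhnat (i : I) (n : ℕ) : FreeAlgebra ℂ (TYGen I) :=
  if n % 2 = 1 then FreeAlgebra.ι ℂ (TYGen.h i ((n - 1) / 2)) else 0

/-- Defining relations of the twisted Yangian `ᵢY` in Drinfeld presentation. -/
inductive TYRel (A : CartanData I) : FreeAlgebra ℂ (TYGen I) → FreeAlgebra ℂ (TYGen I) → Prop
  | ty0 (i j : I) (r s : ℤ) : TYRel A ⁅TYh i r, TYh j s⁆ 0
  | ty1 (i j : I) (r s : ℕ) :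
      TYRel A (⁅TYh i ((r : ℤ) + 1), TYb j s⁆ - ⁅TYh i ((r : ℤ) - 1), TYb j (s + 2)⁆)
        ((A.al i j : ℂ) •
            (TYh i ((r : ℤ) - 1) * TYb j (s + 1) + TYb j (s + 1) * TYh i ((r : ℤ) - 1))
          + (((A.al i j : ℂ) ^ 2 / 4) • ⁅TYh i ((r : ℤ) - 1), TYb j s⁆))
  | ty2 (i j : I) (r s : ℕ) :
      TYRel A (⁅TYb i (r + 1), TYb j s⁆ - ⁅TYb i r, TYb j (s + 1)⁆)
        (((A.al i j : ℂ) / 2) • (TYb i r * TYb j s + TYb j s * TYb i r)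
          - (if i = j then (2 : ℂ) * (-1 : ℂ) ^ s else 0) • TYh i ((r : ℤ) + (s : ℤ) + 1))
  | serre0 (i j : I) (hc : A.c i j = 0) : TYRel A ⁅TYb i 0, TYb j 0⁆ 0
  | serre1 (i j : I) (hc : A.c i j = -1) :
      TYRel A ⁅TYb i 0, ⁅TYb i 0, TYb j 0⁆⁆ ((-(A.d i : ℂ)) • TYb j 0)
  | serre2 (i j : I) (hc : A.c i j = -2) :
      TYRel A ⁅TYb i 0, ⁅TYb i 0, ⁅TYb i 0, TYb j 0⁆⁆⁆
        (((-4 : ℂ) * (A.d i : ℂ)) • ⁅TYb i 0, TYb j 0⁆)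
  | serre3 (i j : I) (hc : A.c i j = -3) :
      TYRel A ⁅TYb i 0, ⁅TYb i 0, ⁅TYb i 0, ⁅TYb i 0, TYb j 0⁆⁆⁆⁆
        (((-10 : ℂ) * (A.d i : ℂ)) • ⁅TYb i 0, ⁅TYb i 0, TYb j 0⁆⁆
          + ((-9 : ℂ) * (A.d i : ℂ) ^ 2) • TYb j 0)

/-- The twisted Yangian `ᵢY` in Drinfeld presentation. -/
abbrev TY (A : CartanData I) : Type := RingQuot (TYRel A)

/-- The generator `h_{i,2r+1}` of the twisted Yangian `ᵢY`. -/
def tyH (A : CartanData I) (i : I) (r : ℕ) : TY A :=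
  RingQuot.mkAlgHom ℂ (TYRel A) (TYhodd i r)

/-- The generator `b_{i,r}` of the twisted Yangian `ᵢY`. -/
def tyB (A : CartanData I) (i : I) (r : ℕ) : TY A :=
  RingQuot.mkAlgHom ℂ (TYRel A) (TYb i r)

/-- Defining relations of the algebra `𝔅` (the presentation of `U(g[z]^ω̌)`). -/
inductive BRel (A : CartanData I) : FreeAlgebra ℂ (TYGen I) → FreeAlgebra ℂ (TYGen I) → Prop
  | hh (i j : I) (r s : ℕ) : BRel A ⁅TYhodd i r, TYhodd j s⁆ 0
  | hb (i j : I) (r s : ℕ) :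
      BRel A ⁅TYhodd i r, TYb j s⁆ ((2 * (A.al i j : ℂ)) • TYb j (2 * r + s + 1))
  | bb (i j : I) (r s : ℕ) :
      BRel A (⁅TYb i (r + 1), TYb j s⁆ - ⁅TYb i r, TYb j (s + 1)⁆)
        ((-(if i = j then (-1 : ℂ) ^ r + (-1 : ℂ) ^ s else 0)) • TYhnat i (r + s + 1))
  | serre0 (i j : I) (hc : A.c i j = 0) : BRel A ⁅TYb i 0, TYb j 0⁆ 0
  | serre1 (i j : I) (hc : A.c i j = -1) :
      BRel A ⁅TYb i 0, ⁅TYb i 0, TYb j 0⁆⁆ ((-(A.d i : ℂ)) • TYb j 0)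
  | serre2 (i j : I) (hc : A.c i j = -2) :
      BRel A ⁅TYb i 0, ⁅TYb i 0, ⁅TYb i 0, TYb j 0⁆⁆⁆
        (((-4 : ℂ) * (A.d i : ℂ)) • ⁅TYb i 0, TYb j 0⁆)
  | serre3 (i j : I) (hc : A.c i j = -3) :
      BRel A ⁅TYb i 0, ⁅TYb i 0, ⁅TYb i 0, ⁅TYb i 0, TYb j 0⁆⁆⁆⁆
        (((-10 : ℂ) * (A.d i : ℂ)) • ⁅TYb i 0, ⁅TYb i 0, TYb j 0⁆⁆
          + ((-9 : ℂ) * (A.d i : ℂ) ^ 2) • TYb j 0)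

/-- The algebra `𝔅`. -/
abbrev BAlg (A : CartanData I) : Type := RingQuot (BRel A)

/-- The generator `h_{i,2r+1}` of `𝔅`. -/
def hB (A : CartanData I) (i : I) (r : ℕ) : BAlg A :=
  RingQuot.mkAlgHom ℂ (BRel A) (TYhodd i r)

/-- The generator `b_{i,r}` of `𝔅`. -/
def bB (A : CartanData I) (i : I) (r : ℕ) : BAlg A :=
  RingQuot.mkAlgHom ℂ (BRel A) (TYb i r)

end Algebras

/-- Generators `h_{i,1}`, `b_{i,0}`, `b_{i,1}` for the minimalistic presentations. -/
inductive MinGen (I : Type) : Type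
  | h1 : I → MinGen I
  | b0 : I → MinGen I
  | b1 : I → MinGen I

section MinAlgebras

variable {I : Type} [Fintype I] [DecidableEq I]

/-- The generator `h_{i,1}` of the free algebra. -/
def mh (i : I) : FreeAlgebra ℂ (MinGen I) := FreeAlgebra.ι ℂ (MinGen.h1 i)

/-- The generator `b_{i,0}` of the free algebra. -/
def mb0 (i : I) : FreeAlgebra ℂ (MinGen I) := FreeAlgebra.ι ℂ (MinGen.b0 i)

/-- The generator `b_{i,1}` of the free algebra. -/
def mb1 (i : I) : FreeAlgebra ℂ (MinGen I) := FreeAlgebra.ι ℂ (MinGen.b1 i)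

/-- Defining relations of the minimalistic presentation `ᵢY^min`. -/
inductive MinRel (A : CartanData I) : FreeAlgebra ℂ (MinGen I) → FreeAlgebra ℂ (MinGen I) → Prop
  | hh (i j : I) : MinRel A ⁅mh i, mh j⁆ 0
  | hb (i j : I) : MinRel A ⁅mh i, mb0 j⁆ ((2 * (A.al i j : ℂ)) • mb1 j)
  | bb (i j : I) :
      MinRel A (⁅mb1 i, mb0 j⁆ - ⁅mb0 i, mb1 j⁆)
        (((A.al i j : ℂ) / 2) • (mb0 i * mb0 j + mb0 j * mb0 i)
          - (if i = j then (2 : ℂ) else 0) • mh i)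
  | serre0 (i j : I) (hc : A.c i j = 0) : MinRel A ⁅mb0 i, mb0 j⁆ 0
  | serre1 (i j : I) (hc : A.c i j = -1) :
      MinRel A ⁅mb0 i, ⁅mb0 i, mb0 j⁆⁆ ((-(A.d i : ℂ)) • mb0 j)
  | serre2 (i j : I) (hc : A.c i j = -2) :
      MinRel A ⁅mb0 i, ⁅mb0 i, ⁅mb0 i, mb0 j⁆⁆⁆ (((-4 : ℂ) * (A.d i : ℂ)) • ⁅mb0 i, mb0 j⁆)
  | serre3 (i j : I) (hc : A.c i j = -3) :
      MinRel A ⁅mb0 i, ⁅mb0 i, ⁅mb0 i, ⁅mb0 i, mb0 j⁆⁆⁆⁆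
        (((-10 : ℂ) * (A.d i : ℂ)) • ⁅mb0 i, ⁅mb0 i, mb0 j⁆⁆
          + ((-9 : ℂ) * (A.d i : ℂ) ^ 2) • mb0 j)

/-- The relations of `ᵢY^min` together with the additional relation
`[h_{i₀,1},[b_{i₀,1},[h_{i₀,1},b_{i₀,1}]]] = (α_{i₀},α_{i₀})² [b_{i₀,1}², h_{i₀,1}]`. -/
inductive MinRelP (A : CartanData I) (i₀ : I) :
    FreeAlgebra ℂ (MinGen I) → FreeAlgebra ℂ (MinGen I) → Prop
  | base {x y : FreeAlgebra ℂ (MinGen I)} : MinRel A x y → MinRelP A i₀ x y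
  | extra : MinRelP A i₀ ⁅mh i₀, ⁅mb1 i₀, ⁅mh i₀, mb1 i₀⁆⁆⁆
      (((A.al i₀ i₀ : ℂ) ^ 2) • ⁅mb1 i₀ * mb1 i₀, mh i₀⁆)

/-- Defining relations of the algebra `𝒰`. -/
inductive URel (A : CartanData I) : FreeAlgebra ℂ (MinGen I) → FreeAlgebra ℂ (MinGen I) → Prop
  | hh (i j : I) : URel A ⁅mh i, mh j⁆ 0
  | hb (i j : I) : URel A ⁅mh i, mb0 j⁆ ((2 * (A.al i j : ℂ)) • mb1 j)
  | bb (i j : I) :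
      URel A ⁅mb1 i, mb0 j⁆ (⁅mb0 i, mb1 j⁆ - (if i = j then (2 : ℂ) else 0) • mh i)
  | serre0 (i j : I) (hc : A.c i j = 0) : URel A ⁅mb0 i, mb0 j⁆ 0
  | serre1 (i j : I) (hc : A.c i j = -1) :
      URel A ⁅mb0 i, ⁅mb0 i, mb0 j⁆⁆ ((-(A.d i : ℂ)) • mb0 j)
  | serre2 (i j : I) (hc : A.c i j = -2) :
      URel A ⁅mb0 i, ⁅mb0 i, ⁅mb0 i, mb0 j⁆⁆⁆ (((-4 : ℂ) * (A.d i : ℂ)) • ⁅mb0 i, mb0 j⁆)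
  | serre3 (i j : I) (hc : A.c i j = -3) :
      URel A ⁅mb0 i, ⁅mb0 i, ⁅mb0 i, ⁅mb0 i, mb0 j⁆⁆⁆⁆
        (((-10 : ℂ) * (A.d i : ℂ)) • ⁅mb0 i, ⁅mb0 i, mb0 j⁆⁆
          + ((-9 : ℂ) * (A.d i : ℂ) ^ 2) • mb0 j)

/-- The relations of `𝒰` together with the additional relation
`[h_{i₀,1},[b_{i₀,1},[h_{i₀,1},b_{i₀,1}]]] = 0`. -/
inductive URelP (A : CartanData I) (i₀ : I) :
    FreeAlgebra ℂ (MinGen I) → FreeAlgebra ℂ (MinGen I) → Prop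
  | base {x y : FreeAlgebra ℂ (MinGen I)} : URel A x y → URelP A i₀ x y
  | extra : URelP A i₀ ⁅mh i₀, ⁅mb1 i₀, ⁅mh i₀, mb1 i₀⁆⁆⁆ 0

/-- The algebra `𝒰`. -/
abbrev UAlg (A : CartanData I) : Type := RingQuot (URel A)

/-- The generator `h_{i,1}` of `𝒰`. -/
def uH1 (A : CartanData I) (i : I) : UAlg A := RingQuot.mkAlgHom ℂ (URel A) (mh i)

/-- The generator `b_{i,0}` of `𝒰`. -/
def uB0 (A : CartanData I) (i : I) : UAlg A := RingQuot.mkAlgHom ℂ (URel A) (mb0 i)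

/-- The generator `b_{i,1}` of `𝒰`. -/
def uB1 (A : CartanData I) (i : I) : UAlg A := RingQuot.mkAlgHom ℂ (URel A) (mb1 i)

/-- The elements `b_{i,r}` of `𝒰`, defined recursively by
`b_{i,r+1} := (2(α_i,α_i))⁻¹ [h_{i,1}, b_{i,r}]` for `r ≥ 1`. -/
def uB (A : CartanData I) (i : I) : ℕ → UAlg A
  | 0 => uB0 A i
  | 1 => uB1 A i
  | r + 2 => (2 * (A.al i i : ℂ))⁻¹ • ⁅uH1 A i, uB A i (r + 1)⁆

/-- The elements `h_{i,r}` of `𝒰`: `h_{i,0} := 0`, `h_{i,1}` is the generator, and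
`h_{i,r+1} := [b_{i,0}, b_{i,r+1}]` for `r ≥ 1`. -/
def uH (A : CartanData I) (i : I) : ℕ → UAlg A
  | 0 => 0
  | 1 => uH1 A i
  | r + 2 => ⁅uB0 A i, uB A i (r + 2)⁆

end MinAlgebras

/-!
The `h_{k,1}` commute, so `ad h_{i,1}` commutes with `ad h_{j,1}`. Every `b_{j,r+1}` is a fixed
multiple of `[h_{j,1}, b_{j,r}]` (for `r = 0` by the relation `[h_{j,1}, b_{j,0}] = 2(α_j,α_j) b_{j,1}`),
so the relation `[h_{i,1}, b_{j,0}] = 2(α_i,α_j) b_{j,1}` propagates from `r` to `r + 1`.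
-/

theorem lie_eq_smul_succ_of_lie_eq_zero {R L : Type*} [CommRing R] [LieRing L] [LieAlgebra R L]
    {x y : L} (hxy : ⁅x, y⁆ = 0) {b : ℕ → L} {t : R} (hb : ∀ n, b (n + 1) = t • ⁅y, b n⁆)
    {c : R} (h₀ : ⁅x, b 0⁆ = c • b 1) (n : ℕ) : ⁅x, b n⁆ = c • b (n + 1) := by
  induction n with
  | zero => exact h₀
  | succ n ih =>
    calc ⁅x, b (n + 1)⁆ = t • ⁅y, ⁅x, b n⁆⁆ := by
          rw [hb, lie_smul, leibniz_lie, hxy, zero_lie, zero_add]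
      _ = c • b (n + 2) := by rw [ih, lie_smul, smul_comm, ← hb]

theorem CartanData.two_mul_al_self_ne_zero {I : Type} [Fintype I] (A : CartanData I) (j : I) :
    (2 * (A.al j j : ℂ)) ≠ 0 := by
  have hal : A.al j j = 2 * A.d j := by simp [CartanData.al, A.c_diag j, mul_comm]
  have hd : A.d j ≠ 0 := (A.d_pos j).ne'
  rw [hal]
  exact_mod_cast by positivity

section UAlg

-- Kept local: the bracket in the statement of `U_h1_b_bracket` is the bare ring commutator.
attribute [local instance] LieRing.ofAssociativeRing

variable {I : Type} [Fintype I] [DecidableEq I] (A : CartanData I)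

theorem uAlg_mk_lie (x y : FreeAlgebra ℂ (MinGen I)) :
    RingQuot.mkAlgHom ℂ (URel A) ⁅x, y⁆ =
      ⁅RingQuot.mkAlgHom ℂ (URel A) x, RingQuot.mkAlgHom ℂ (URel A) y⁆ :=
  (RingQuot.mkAlgHom ℂ (URel A)).toLieHom.map_lie x y

theorem uH1_lie_uH1 (i j : I) : ⁅uH1 A i, uH1 A j⁆ = 0 := by
  simpa [uH1, uAlg_mk_lie] using RingQuot.mkAlgHom_rel ℂ (URel.hh (A := A) i j)

theorem uH1_lie_uB0 (i j : I) : ⁅uH1 A i, uB0 A j⁆ = (2 * (A.al i j : ℂ)) • uB1 A j := by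
  simpa [uH1, uB0, uB1, uAlg_mk_lie] using RingQuot.mkAlgHom_rel ℂ (URel.hb (A := A) i j)

theorem uB_succ (j : I) (r : ℕ) :
    uB A j (r + 1) = (2 * (A.al j j : ℂ))⁻¹ • ⁅uH1 A j, uB A j r⁆ := by
  cases r with
  | zero =>
    change uB1 A j = _ • ⁅uH1 A j, uB0 A j⁆
    rw [uH1_lie_uB0, inv_smul_smul₀ (A.two_mul_al_self_ne_zero j)]
  | succ r => rfl

theorem uH1_lie_uB (i j : I) (r : ℕ) :
    ⁅uH1 A i, uB A j r⁆ = (2 * (A.al i j : ℂ)) • uB A j (r + 1) :=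
  lie_eq_smul_succ_of_lie_eq_zero (uH1_lie_uH1 A i j) (uB_succ A j) (uH1_lie_uB0 A i j) r

end UAlg

theorem U_h1_b_bracket_general
    {I : Type} [Fintype I] [DecidableEq I] (A : CartanData I)
    (i j : I) (r : ℕ) :
    ⁅uH A i 1, uB A j r⁆ = (2 * (A.al i j : ℂ)) • uB A j (r + 1) :=
  uH1_lie_uB A i j r

/-- in `𝒰`, `[h_{i,1}, b_{j,r}] = 2(α_i,α_j) b_{j,r+1}` for all `i, j, r`. -/
theorem U_h1_b_bracket
    {I : Type} [Fintype I] [DecidableEq I] [Nonempty I] (A : CartanData I)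
    (i j : I) (r : ℕ) :
    ⁅uH A i 1, uB A j r⁆ = (2 * (A.al i j : ℂ)) • uB A j (r + 1) :=
  U_h1_b_bracket_general A i j r
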